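/- arXiv:1309.2955 — 2 statements merged into one kernel-verified Lean document; each statement's English description precedes it below -/
import Mathlib

section
/- Under the translation-invariant Gibbs measure on permutations of a finite abelian group, for every x, k in the group and every m ≥ 1, the probability that π(x) - x = k equals the probability that π^m(x) - π^{m-1}(x) = k. -/
open Finset

/-- Total jump energy `H_N(π) = Σ_x ξ(π(x) - x)` on a finite abelian group. -/
def energy {G : Type*} [Fintype G] [AddCommGroup G] (ξ : G → ℝ) (π : Equiv.Perm G) : ℝ :=
  ∑ x : G, ξ (π x - x)

/-- Probability of a set `A` of permutations under the Gibbs measure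
`P(π) ∝ exp(-α H(π))`. -/
noncomputable def gibbsProb {G : Type*} [Fintype G] [DecidableEq G] [AddCommGroup G]
    (ξ : G → ℝ) (α : ℝ) (A : Finset (Equiv.Perm G)) : ℝ :=
  (∑ π ∈ A, Real.exp (-α * energy ξ π)) /
    (∑ π : Equiv.Perm G, Real.exp (-α * energy ξ π))

lemma jump_conj_apply {G : Type*} [AddCommGroup G] (z : G) (π : Equiv.Perm G) (y : G) :
    (Equiv.addLeft z * π * (Equiv.addLeft z)⁻¹) (z + y) = z + π y := by
  simp [Equiv.Perm.mul_apply]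

lemma jump_energy_conj {G : Type*} [Fintype G] [AddCommGroup G] (ξ : G → ℝ) (z : G)
    (π : Equiv.Perm G) :
    energy ξ (Equiv.addLeft z * π * (Equiv.addLeft z)⁻¹) = energy ξ π := by
  refine (Fintype.sum_equiv (Equiv.addLeft z) _ _ fun y => ?_).symm
  rw [Equiv.coe_addLeft]
  show ξ (π y - y) = ξ ((Equiv.addLeft z * π * (Equiv.addLeft z)⁻¹) (z + y) - (z + y))
  rw [jump_conj_apply z π y, add_sub_add_left_eq_sub]

/-- Translation invariance of the numerator. -/
lemma jump_num_shift {G : Type*} [Fintype G] [DecidableEq G] [AddCommGroup G]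
    (ξ : G → ℝ) (α : ℝ) (k z y : G) (a b : ℕ) :
    ∑ π ∈ univ.filter (fun π : Equiv.Perm G => (π ^ a) (z + y) - (π ^ b) (z + y) = k),
        Real.exp (-α * energy ξ π)
      = ∑ π ∈ univ.filter (fun π : Equiv.Perm G => (π ^ a) y - (π ^ b) y = k),
        Real.exp (-α * energy ξ π) := by
  rw [Finset.sum_filter, Finset.sum_filter]
  refine (Fintype.sum_equiv
    (MulAut.conj (Equiv.addLeft z : Equiv.Perm G)).toEquiv _ _ fun π => ?_).symm
  have h : ∀ j : ℕ,
      (((MulAut.conj (Equiv.addLeft z : Equiv.Perm G)) π : Equiv.Perm G) ^ j) (z + y)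
        = z + (π ^ j) y := by
    intro j
    rw [MulAut.conj_apply, conj_pow]
    exact jump_conj_apply z (π ^ j) y
  show (if (π ^ a) y - (π ^ b) y = k then Real.exp (-α * energy ξ π) else 0) = _
  rw [show ((MulAut.conj (Equiv.addLeft z : Equiv.Perm G)).toEquiv π : Equiv.Perm G)
      = Equiv.addLeft z * π * (Equiv.addLeft z)⁻¹ from rfl]
  have ha := h a
  have hb := h b
  rw [MulAut.conj_apply] at ha hb
  rw [ha, hb, add_sub_add_left_eq_sub, jump_energy_conj]

/-- `P(π(x) - x = k) = P(π^m(x) - π^{m-1}(x) = k)` for all `m ≥ 1`. -/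
theorem jump_distribution_along_cycle
    {G : Type*} [Fintype G] [DecidableEq G] [AddCommGroup G]
    (ξ : G → ℝ) (α : ℝ) (hα : 0 < α) (x k : G) (m : ℕ) (hm : 1 ≤ m) :
    gibbsProb ξ α (univ.filter fun π : Equiv.Perm G => π x - x = k) =
    gibbsProb ξ α (univ.filter fun π : Equiv.Perm G =>
      (π ^ m) x - (π ^ (m - 1)) x = k) := by
  unfold gibbsProb
  congr 1
  set w : Equiv.Perm G → ℝ := fun π => Real.exp (-α * energy ξ π) with hw
  -- numerators as functions of the starting point
  set Nm : G → ℝ := fun y =>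
    ∑ π ∈ univ.filter (fun π : Equiv.Perm G => (π ^ m) y - (π ^ (m - 1)) y = k), w π with hNm
  set N1 : G → ℝ := fun y =>
    ∑ π ∈ univ.filter (fun π : Equiv.Perm G => (π ^ 1) y - (π ^ 0) y = k), w π with hN1
  have hfirst : (∑ π ∈ univ.filter (fun π : Equiv.Perm G => π x - x = k), w π) = N1 x := by
    simp [hN1]
  rw [hfirst]
  show N1 x = Nm x
  have hconstm : ∀ y : G, Nm y = Nm x := fun y => by
    have := jump_num_shift ξ α k (y - x) x m (m - 1)
    simpa only [hNm, sub_add_cancel] using this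
  have hconst1 : ∀ y : G, N1 y = N1 x := fun y => by
    have := jump_num_shift ξ α k (y - x) x 1 0
    simpa only [hN1, sub_add_cancel] using this
  -- sum over starting points
  have hsum : ∑ y : G, Nm y = ∑ y : G, N1 y := by
    simp only [hNm, hN1, Finset.sum_filter]
    rw [Finset.sum_comm, Finset.sum_comm (γ := G)]
    refine Finset.sum_congr rfl fun π _ => ?_
    refine Fintype.sum_equiv ((π ^ (m - 1)) : Equiv.Perm G) _ _ fun y => ?_
    have h1 : (π ^ m) y = π ((π ^ (m - 1)) y) := by
      have : π ^ m = π * π ^ (m - 1) := by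
        conv_lhs => rw [show m = (m - 1) + 1 from (Nat.succ_pred_eq_of_pos hm).symm]
        rw [pow_succ']
      rw [this, Equiv.Perm.mul_apply]
    simp [h1]
  have hcard : (0 : ℝ) < (Fintype.card G : ℝ) := by
    exact_mod_cast Fintype.card_pos
  have : (Fintype.card G : ℝ) * Nm x = (Fintype.card G : ℝ) * N1 x := by
    calc (Fintype.card G : ℝ) * Nm x = ∑ y : G, Nm y := by
          rw [Finset.sum_congr rfl fun y _ => hconstm y]; simp [mul_comm]
      _ = ∑ y : G, N1 y := hsum
      _ = (Fintype.card G : ℝ) * N1 x := by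
          rw [Finset.sum_congr rfl fun y _ => hconst1 y]; simp [mul_comm]
  have := mul_left_cancel₀ (ne_of_gt hcard) this
  linarith
end

section
/- Under the translation-invariant Gibbs measure on permutations of a finite abelian group equipped with a norm, the probability that the jump at x is longer than D equals the expected fraction of long jumps in the cycle containing x: P(|π(x)-x| > D) = E[R_{x,D}]. -/
open Finset

/-- The cycle of `π` containing `x`, i.e. `{π^n(x) : n ∈ ℤ}`, as a finset. -/
def permCycle {G : Type*} [Fintype G] [DecidableEq G] (π : Equiv.Perm G) (x : G) : Finset G :=
  (Finset.range (Fintype.card G)).image fun n => (π ^ n) x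

/-- The fraction of points `y` in the cycle of `x` whose jump is longer than `D`. -/
noncomputable def longJumpFraction {G : Type*} [Fintype G] [DecidableEq G]
    [AddCommGroup G] (nrm : G → ℝ) (π : Equiv.Perm G) (x : G) (D : ℝ) : ℝ :=
  ((permCycle π x).filter fun y => D < nrm (π y - y)).card / (permCycle π x).card

section Aux
open Equiv
variable {G : Type*} [Fintype G] [DecidableEq G] [AddCommGroup G]

lemma cv_apply (v : G) (π : Equiv.Perm G) (z : G) :
    ((Equiv.addLeft v).permCongr π) z = v + π (-v + z) := by
  simp [Equiv.permCongr_apply]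

lemma cv_pow (v : G) (π : Equiv.Perm G) (n : ℕ) :
    ((Equiv.addLeft v).permCongr π) ^ n = (Equiv.addLeft v).permCongr (π ^ n) := by
  induction n with
  | zero => ext z; simp
  | succ n ih =>
    ext z
    rw [pow_succ, Equiv.Perm.mul_apply, ih, cv_apply, cv_apply, cv_apply, pow_succ,
      Equiv.Perm.mul_apply, neg_add_cancel_left]

lemma mem_permCycle {π : Equiv.Perm G} {x y : G} :
    y ∈ permCycle π x ↔ π.SameCycle x y := by
  constructor
  · intro h
    simp only [permCycle, Finset.mem_image, Finset.mem_range] at h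
    obtain ⟨n, _, hn⟩ := h
    exact ⟨n, by simpa using hn⟩
  · intro h
    by_cases hx : x ∈ π.support
    · obtain ⟨i, hi, hix⟩ := h.exists_pow_eq_of_mem_support hx
      exact Finset.mem_image.2 ⟨i, Finset.mem_range.2 (lt_of_lt_of_le hi (Finset.card_le_univ _)), hix⟩
    · have hfx : π x = x := by simpa using hx
      obtain ⟨i, hi⟩ := h
      have : y = x := by rw [← hi, Equiv.Perm.zpow_apply_eq_self_of_apply_eq_self hfx]
      subst this
      exact Finset.mem_image.2 ⟨0, Finset.mem_range.2 Fintype.card_pos, by simp⟩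

lemma mem_permCycle_self (π : Equiv.Perm G) (x : G) : x ∈ permCycle π x :=
  mem_permCycle.2 (Equiv.Perm.SameCycle.refl _ _)

lemma permCycle_eq_of_mem {π : Equiv.Perm G} {x y : G} (h : y ∈ permCycle π x) :
    permCycle π y = permCycle π x := by
  have hxy := mem_permCycle.1 h
  ext z
  rw [mem_permCycle, mem_permCycle]
  exact ⟨fun hz => hxy.trans hz, fun hz => hxy.symm.trans hz⟩

lemma permCycle_cv (v : G) (π : Equiv.Perm G) (x : G) :
    permCycle ((Equiv.addLeft v).permCongr π) x
      = (permCycle π (-v + x)).image (fun z => v + z) := by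
  unfold permCycle
  rw [Finset.image_image]
  apply Finset.image_congr
  intro n _
  show (((Equiv.addLeft v).permCongr π) ^ n) x = v + (π ^ n) (-v + x)
  rw [cv_pow, cv_apply]

lemma energy_cv (ξ : G → ℝ) (v : G) (π : Equiv.Perm G) :
    energy ξ ((Equiv.addLeft v).permCongr π) = energy ξ π := by
  unfold energy
  rw [← Equiv.sum_comp (Equiv.addLeft v)
    (fun z => ξ (((Equiv.addLeft v).permCongr π) z - z))]
  apply Finset.sum_congr rfl
  intro z _
  have h1 : ((Equiv.addLeft v).permCongr π) ((Equiv.addLeft v) z) - (Equiv.addLeft v) z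
      = π z - z := by
    rw [cv_apply]
    simp only [Equiv.coe_addLeft, neg_add_cancel_left]
    abel
  rw [h1]

end Aux

/-- `P(|π(x) - x| > D) = E[R_{x,D}]` under the Gibbs measure `P(π) ∝ exp(-α H(π))`. -/
theorem prob_long_jump_eq_expected_fraction
    {G : Type*} [Fintype G] [DecidableEq G] [AddCommGroup G]
    (ξ nrm : G → ℝ) (α : ℝ) (hα : 0 < α) (x : G) (D : ℝ) (hD : 0 < D) :
    (∑ π ∈ univ.filter (fun π : Equiv.Perm G => D < nrm (π x - x)),
        Real.exp (-α * energy ξ π)) /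
      (∑ π : Equiv.Perm G, Real.exp (-α * energy ξ π)) =
    (∑ π : Equiv.Perm G, Real.exp (-α * energy ξ π) * longJumpFraction nrm π x D) /
      (∑ π : Equiv.Perm G, Real.exp (-α * energy ξ π)) := by
  congr 1
  set w : Equiv.Perm G → ℝ := fun π => Real.exp (-α * energy ξ π) with hw
  have hcardpos : ∀ (σ : Equiv.Perm G), (0:ℝ) < ((permCycle σ x).card : ℝ) := fun σ => by
    exact_mod_cast Finset.card_pos.2 ⟨x, mem_permCycle_self σ x⟩
  calc
    ∑ π ∈ univ.filter (fun π : Equiv.Perm G => D < nrm (π x - x)), w π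
      = ∑ σ : Equiv.Perm G, if D < nrm (σ x - x) then w σ else 0 := by
        rw [Finset.sum_filter]
    _ = ∑ σ : Equiv.Perm G, ∑ y : G,
          if ((-(y - x) + x) ∈ permCycle σ x ∧ D < nrm (σ x - x))
          then w σ / ((permCycle σ x).card : ℝ) else 0 := by
        apply Finset.sum_congr rfl
        intro σ _
        rw [← Equiv.sum_comp (Equiv.subLeft (x + x))
          (fun y => if ((-(y - x) + x) ∈ permCycle σ x ∧ D < nrm (σ x - x))
            then w σ / ((permCycle σ x).card : ℝ) else 0)]
        have hz : ∀ z : G, (-(((Equiv.subLeft (x + x)) z) - x) + x) = z := by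
          intro z; simp [Equiv.subLeft]; abel
        simp only [hz]
        by_cases hq : D < nrm (σ x - x)
        · rw [if_pos hq]
          simp only [hq, and_true]
          rw [Finset.sum_ite_mem, Finset.univ_inter, Finset.sum_const, nsmul_eq_mul,
            mul_div_cancel₀ _ (ne_of_gt (hcardpos σ))]
        · rw [if_neg hq]
          simp [hq]
    _ = ∑ y : G, ∑ σ : Equiv.Perm G,
          if ((-(y - x) + x) ∈ permCycle σ x ∧ D < nrm (σ x - x))
          then w σ / ((permCycle σ x).card : ℝ) else 0 := Finset.sum_comm
    _ = ∑ y : G, ∑ π : Equiv.Perm G,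
          if (y ∈ permCycle π x ∧ D < nrm (π y - y))
          then w π / ((permCycle π x).card : ℝ) else 0 := by
        apply Finset.sum_congr rfl
        intro y _
        rw [← Equiv.sum_comp ((Equiv.addLeft (y - x)).permCongr)
          (fun π => if (y ∈ permCycle π x ∧ D < nrm (π y - y))
            then w π / ((permCycle π x).card : ℝ) else 0)]
        apply Finset.sum_congr rfl
        intro σ _
        set v := y - x with hv
        set c := (Equiv.addLeft v).permCongr σ with hc
        show (if ((-v + x) ∈ permCycle σ x ∧ D < nrm (σ x - x))
            then w σ / ((permCycle σ x).card : ℝ) else 0)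
          = (if (y ∈ permCycle c x ∧ D < nrm (c y - y))
            then w c / ((permCycle c x).card : ℝ) else 0)
        have hjump : c y - y = σ x - x := by
          rw [hc, cv_apply]
          have : -v + y = x := by rw [hv]; abel
          rw [this, hv]; abel
        have hvx : v + x = y := by rw [hv]; abel
        have hmem : y ∈ permCycle c x ↔ (-v + x) ∈ permCycle σ x := by
          rw [hc, permCycle_cv, Finset.mem_image]
          constructor
          · rintro ⟨z, hz, hzy⟩
            have hxz : z = x := by
              rw [← neg_add_cancel_left v z, hzy, hv]; abel
            rw [hxz] at hz
            exact mem_permCycle.2 ((mem_permCycle.1 hz).symm)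
          · intro h
            exact ⟨x, mem_permCycle.2 ((mem_permCycle.1 h).symm), hvx⟩
        have hwc : w c = w σ := by rw [hw]; simp only [hc, energy_cv]
        by_cases h : (-v + x) ∈ permCycle σ x ∧ D < nrm (σ x - x)
        · rw [if_pos h, if_pos ⟨hmem.2 h.1, by rw [hjump]; exact h.2⟩, hwc]
          congr 2
          rw [hc, permCycle_cv, Finset.card_image_of_injective _ (add_right_injective v),
            permCycle_eq_of_mem h.1]
        · rw [if_neg h, if_neg]
          rintro ⟨h1, h2⟩
          exact h ⟨hmem.1 h1, by rwa [← hjump]⟩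
    _ = ∑ π : Equiv.Perm G, ∑ y : G,
          if (y ∈ permCycle π x ∧ D < nrm (π y - y))
          then w π / ((permCycle π x).card : ℝ) else 0 := Finset.sum_comm
    _ = ∑ π : Equiv.Perm G, w π * longJumpFraction nrm π x D := by
        apply Finset.sum_congr rfl
        intro π _
        have hfe : (Finset.univ.filter fun y => y ∈ permCycle π x ∧ D < nrm (π y - y))
            = (permCycle π x).filter fun y => D < nrm (π y - y) := by
          ext y; simp [Finset.mem_filter]
        rw [Finset.sum_ite, Finset.sum_const_zero, add_zero, Finset.sum_const, hfe,
          nsmul_eq_mul, longJumpFraction]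
        ring
end
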